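/- Let (Y_i)_{1≤i≤N} be centered, integrable real random variables such that for some constant C_0 > 0 and rate C > 0, the bound |E[Y_i Y_j Y_k Y_l]| ≤ C_0 exp(−C · max(|i−j|, |k−l|)) holds for all indices i ≤ j ≤ k ≤ l in {1,…,N}. Then there exists a constant C' depending only on C_0 and C (not on N) such that E[(∑_{i=1}^N Y_i)^4] ≤ C' N². -/

import Mathlib

/-!
Expand `(∑ i, Y i)^4` into the sum of the moments `E[Y (t 0) ⋯ Y (t 3)]` over all index tuples
`t`. For a sorted tuple, `max a b ≥ (a + b) / 2` turns the hypothesis into the product bound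
`C₀ r^|t₀ - t₁| r^|t₂ - t₃|` with `r = exp (-C/2)`. A moment is invariant under permuting its
indices, so every tuple is bounded by the sum of this product over all 24 reorderings. Summed
over all tuples, each reordering contributes `(∑ i j, r^|i - j|)^2`, and every row of that
kernel has sum at most `2 / (1 - r)`, which gives `O(N²)`.
-/

open MeasureTheory Finset

section Tuples

variable {ι M R : Type*} [Fintype ι] [AddCommMonoid M] [CommSemiring R]

theorem Fintype.sum_fin_succ_pi {n : ℕ} (f : (Fin (n + 1) → ι) → M) :
    ∑ t, f t = ∑ a, ∑ t : Fin n → ι, f (Fin.cons a t) := by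
  rw [← (Fin.consEquiv fun _ => ι).sum_comp, Fintype.sum_prod_type]
  rfl

theorem sum_sum_perm_comp (n : ℕ) (B : (Fin n → ι) → M) :
    ∑ t : Fin n → ι, ∑ σ : Equiv.Perm (Fin n), B (t ∘ σ) =
      n.factorial • ∑ t, B t := by
  have hcomp (σ : Equiv.Perm (Fin n)) : ∑ t : Fin n → ι, B (t ∘ σ) = ∑ t, B t :=
    (σ.symm.arrowCongr (Equiv.refl ι)).sum_comp B
  rw [sum_comm]
  simp [hcomp, Fintype.card_perm]

theorem sum_pairing_eq_sq (d : ι → ι → R) :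
    ∑ t : Fin 4 → ι, d (t 0) (t 1) * d (t 2) (t 3) = (∑ i, ∑ j, d i j) ^ 2 := by
  simp only [Fintype.sum_fin_succ_pi, Fintype.sum_unique]
  change ∑ a, ∑ b, ∑ c, ∑ e, d a b * d c e = _
  simp_rw [sq, sum_mul_sum]
  exact sum_congr rfl fun _ _ => sum_comm

end Tuples

section Moments

variable {Ω : Type*} [MeasurableSpace Ω] {μ : Measure Ω} {ι : Type*} {Y : ι → Ω → ℝ}

theorem integral_sum_pow_eq [Fintype ι] (n : ℕ)
    (hint : ∀ t : Fin n → ι, Integrable (fun ω => ∏ m, Y (t m) ω) μ) :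
    ∫ ω, (∑ i, Y i ω) ^ n ∂μ = ∑ t : Fin n → ι, ∫ ω, ∏ m, Y (t m) ω ∂μ := by
  simp_rw [Fintype.sum_pow]
  exact integral_finsetSum _ fun t _ => hint t

variable [LinearOrder ι]

theorem integrable_and_abs_integral_prod_le_of_monotone {n : ℕ} {B : (Fin n → ι) → ℝ}
    (hB : ∀ t, 0 ≤ B t)
    (hmono : ∀ t : Fin n → ι, Monotone t →
      Integrable (fun ω => ∏ m, Y (t m) ω) μ ∧ |∫ ω, ∏ m, Y (t m) ω ∂μ| ≤ B t)
    (t : Fin n → ι) :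
    Integrable (fun ω => ∏ m, Y (t m) ω) μ ∧
      |∫ ω, ∏ m, Y (t m) ω ∂μ| ≤ ∑ σ : Equiv.Perm (Fin n), B (t ∘ σ) := by
  have hsort : (fun ω => ∏ m, Y ((t ∘ Tuple.sort t) m) ω) = fun ω => ∏ m, Y (t m) ω :=
    funext fun ω => Equiv.prod_comp (Tuple.sort t) fun m => Y (t m) ω
  obtain ⟨hint, hbound⟩ := hmono _ (Tuple.monotone_sort t)
  rw [hsort] at hint hbound
  exact ⟨hint, hbound.trans (single_le_sum (f := fun σ : Equiv.Perm (Fin n) => B (t ∘ σ))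
    (fun σ _ => hB _) (mem_univ _))⟩

theorem integral_sum_pow_four_le [Fintype ι] {d : ι → ι → ℝ} (hd : ∀ i j, 0 ≤ d i j)
    {K : ℝ} (hK : 0 ≤ K)
    (hmono : ∀ t : Fin 4 → ι, Monotone t → Integrable (fun ω => ∏ m, Y (t m) ω) μ ∧
      |∫ ω, ∏ m, Y (t m) ω ∂μ| ≤ K * (d (t 0) (t 1) * d (t 2) (t 3))) :
    ∫ ω, (∑ i, Y i ω) ^ 4 ∂μ ≤ 24 * K * (∑ i, ∑ j, d i j) ^ 2 := by
  have h := integrable_and_abs_integral_prod_le_of_monotone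
    (fun t => mul_nonneg hK (mul_nonneg (hd _ _) (hd _ _))) hmono
  calc ∫ ω, (∑ i, Y i ω) ^ 4 ∂μ = ∑ t : Fin 4 → ι, ∫ ω, ∏ m, Y (t m) ω ∂μ :=
        integral_sum_pow_eq 4 fun t => (h t).1
    _ ≤ _ := sum_le_sum fun t _ => (le_abs_self _).trans (h t).2
    _ = 24 * K * (∑ i, ∑ j, d i j) ^ 2 := by
        refine (sum_sum_perm_comp 4 fun t => K * (d (t 0) (t 1) * d (t 2) (t 3))).trans ?_
        rw [← mul_sum, sum_pairing_eq_sq, nsmul_eq_mul]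
        norm_num [Nat.factorial]
        ring

end Moments

theorem abs_natCast_sub_natCast {R : Type*} [Ring R] [LinearOrder R] [IsStrictOrderedRing R]
    (m n : ℕ) : |(m : R) - n| = Nat.dist m n := by
  rcases le_total m n with h | h
  · rw [abs_sub_comm]
    simp [Nat.dist_eq_sub_of_le h, h]
  · simp [Nat.dist_eq_sub_of_le_right h, h]

theorem exp_neg_mul_max_abs_sub_le {C : ℝ} (hC : 0 ≤ C) (i j k l : ℕ) :
    Real.exp (-C * max |(i : ℝ) - j| |(k : ℝ) - l|) ≤
      Real.exp (-(C / 2)) ^ Nat.dist i j * Real.exp (-(C / 2)) ^ Nat.dist k l := by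
  rw [abs_natCast_sub_natCast, abs_natCast_sub_natCast, ← Real.exp_nat_mul, ← Real.exp_nat_mul,
    ← Real.exp_add]
  refine Real.exp_le_exp.mpr ?_
  nlinarith [le_max_left (Nat.dist i j : ℝ) (Nat.dist k l),
    le_max_right (Nat.dist i j : ℝ) (Nat.dist k l)]

theorem sum_range_pow_dist_le {r : ℝ} (hr0 : 0 ≤ r) (hr1 : r < 1) (m N : ℕ) :
    ∑ n ∈ range N, r ^ Nat.dist m n ≤ 2 / (1 - r) := by
  have hgeom (K : ℕ) : ∑ k ∈ range K, r ^ k ≤ 1 / (1 - r) := by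
    simpa using geom_sum_Ico_le_of_lt_one (m := 0) (n := K) hr0 hr1
  calc ∑ n ∈ range N, r ^ Nat.dist m n
      ≤ ∑ n ∈ range (m + 1 + N), r ^ Nat.dist m n :=
        sum_le_sum_of_subset_of_nonneg (range_mono (by omega)) fun _ _ _ => by positivity
    _ = ∑ k ∈ range (m + 1), r ^ k + ∑ k ∈ range N, r ^ (k + 1) := by
        rw [sum_range_add, ← sum_range_reflect]
        congr 1 <;> refine sum_congr rfl fun k hk => ?_
        · rw [mem_range] at hk
          rw [Nat.dist_eq_sub_of_le_right (by omega)]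
          congr 1
          omega
        · rw [Nat.dist_eq_sub_of_le (by omega)]
          congr 1
          omega
    _ ≤ ∑ k ∈ range (m + 1), r ^ k + ∑ k ∈ range N, r ^ k :=
        add_le_add_right (sum_le_sum fun k _ => pow_le_pow_of_le_one hr0 hr1.le k.le_succ) _
    _ ≤ 2 / (1 - r) := by
        linarith [hgeom (m + 1), hgeom N, show 2 / (1 - r) = 1 / (1 - r) + 1 / (1 - r) by ring]

theorem sum_sum_pow_dist_le {r : ℝ} (hr0 : 0 ≤ r) (hr1 : r < 1) (N : ℕ) :
    ∑ i : Fin N, ∑ j : Fin N, r ^ Nat.dist i j ≤ N * (2 / (1 - r)) := by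
  calc ∑ i : Fin N, ∑ j : Fin N, r ^ Nat.dist i j ≤ ∑ _i : Fin N, 2 / (1 - r) :=
        sum_le_sum fun i _ => by
          rw [Fin.sum_univ_eq_sum_range (fun j => r ^ Nat.dist i j)]
          exact sum_range_pow_dist_le hr0 hr1 i N
    _ = N * (2 / (1 - r)) := by simp

/-- Fourth moment bound: centered variables with exponentially decaying fourth-order
correlations satisfy `E[(∑ Y_i)^4] ≤ C' N²` with `C'` independent of `N`. -/
theorem stmt4 (C₀ C : ℝ) (hC₀ : 0 < C₀) (hC : 0 < C) :
    ∃ C' : ℝ, 0 < C' ∧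
      ∀ (N : ℕ) (Ω : Type) (mΩ : MeasurableSpace Ω) (μ : Measure Ω),
        IsProbabilityMeasure μ →
        ∀ Y : Fin N → Ω → ℝ,
        (∀ i, Integrable (Y i) μ) →
        (∀ i, ∫ ω, Y i ω ∂μ = 0) →
        (∀ i j k l : Fin N, (i : ℕ) ≤ j → (j : ℕ) ≤ k → (k : ℕ) ≤ l →
          Integrable (fun ω => Y i ω * Y j ω * Y k ω * Y l ω) μ ∧
          |∫ ω, Y i ω * Y j ω * Y k ω * Y l ω ∂μ| ≤
            C₀ * Real.exp (-C * max |((i : ℕ) : ℝ) - ((j : ℕ) : ℝ)|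
                                    |((k : ℕ) : ℝ) - ((l : ℕ) : ℝ)|)) →
        ∫ ω, (∑ i, Y i ω) ^ 4 ∂μ ≤ C' * (N : ℝ) ^ 2 := by
  set r := Real.exp (-(C / 2))
  have hr0 : 0 < r := Real.exp_pos _
  have hr1 : r < 1 := Real.exp_lt_one_iff.mpr (by linarith)
  have h1r : 0 < 1 - r := sub_pos.mpr hr1
  refine ⟨96 * C₀ / (1 - r) ^ 2, by positivity, ?_⟩
  intro N Ω _ μ _ Y _ _ hcorr
  have hsorted (t : Fin 4 → Fin N) (ht : Monotone t) :
      Integrable (fun ω => ∏ m, Y (t m) ω) μ ∧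
        |∫ ω, ∏ m, Y (t m) ω ∂μ| ≤
          C₀ * (r ^ Nat.dist (t 0) (t 1) * r ^ Nat.dist (t 2) (t 3)) := by
    simp only [Fin.prod_univ_four]
    obtain ⟨hint, hbound⟩ :=
      hcorr (t 0) (t 1) (t 2) (t 3) (ht (by decide)) (ht (by decide)) (ht (by decide))
    exact ⟨hint, hbound.trans
      (mul_le_mul_of_nonneg_left (exp_neg_mul_max_abs_sub_le hC.le _ _ _ _) hC₀.le)⟩
  calc ∫ ω, (∑ i, Y i ω) ^ 4 ∂μ
      ≤ 24 * C₀ * (∑ i : Fin N, ∑ j : Fin N, r ^ Nat.dist i j) ^ 2 :=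
        integral_sum_pow_four_le (fun _ _ => by positivity) hC₀.le hsorted
    _ ≤ 24 * C₀ * (N * (2 / (1 - r))) ^ 2 := by
        gcongr
        exact sum_sum_pow_dist_le hr0.le hr1 N
    _ = 96 * C₀ / (1 - r) ^ 2 * N ^ 2 := by
        field_simp
        ring
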